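/- Let G be a graph on n vertices and 1 ≤ k ≤ ⌊n/2⌋. Then every eigenvalue λ of the Laplacian L_k(G) of the k-th token graph satisfies λ ≤ k·λ_max(L(G)), where λ_max(L(G)) is the largest Laplacian eigenvalue of G. -/

import Mathlib

/-!
Every edge of `F_k(G)` joins `S ∪ {u}` and `S ∪ {v}` for exactly one set `S` and edge `uv` of `G`
with `u, v ∉ S`. Hence for `φ` on `k`-sets, extended by zero to all sets, the quadratic form
`φᵀ L_k φ` is at most `∑_S x_Sᵀ L x_S`, where `x_S u = φ (S ∪ {u})` for `u ∉ S` and `x_S u = 0`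
otherwise: the edges of `G` meeting `S` only add nonnegative terms. Each summand is at most
`λ_max(L) ‖x_S‖²`, and since a `k`-set arises as `S ∪ {u}` in exactly `k` ways,
`∑_S ‖x_S‖² = k ‖φ‖²`. So the Rayleigh quotient of `L_k`, and with it every eigenvalue, is at
most `k λ_max(L)`.
-/

open Finset Matrix

/-- The `k`-th token graph of a graph `G` on `[n]` = `Fin n`: vertices are the `k`-subsets of
`[n]`, and `A, B` are adjacent iff `|A ∩ B| = k - 1` and `A △ B` is an edge of `G`. -/
def tokenGraph (n k : ℕ) (G : SimpleGraph (Fin n)) :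
    SimpleGraph {s : Finset (Fin n) // s.card = k} :=
  SimpleGraph.fromRel (fun A B =>
    (A.1 ∩ B.1).card = k - 1 ∧ ∃ u v, G.Adj u v ∧ symmDiff A.1 B.1 = {u, v})

noncomputable instance (n k : ℕ) (G : SimpleGraph (Fin n)) :
    DecidableRel (tokenGraph n k G).Adj := Classical.decRel _

/-- Laplacian matrix of the `k`-th token graph. -/
noncomputable def lapTok (n k : ℕ) (G : SimpleGraph (Fin n)) :
    Matrix {s : Finset (Fin n) // s.card = k} {s : Finset (Fin n) // s.card = k} ℝ :=
  SimpleGraph.lapMatrix ℝ (tokenGraph n k G)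

/-- The largest eigenvalue of a (symmetric) real matrix. -/
noncomputable def lamMax {V : Type*} [Fintype V] (M : Matrix V V ℝ) : ℝ :=
  sSup {μ : ℝ | ∃ φ : V → ℝ, φ ≠ 0 ∧ M *ᵥ φ = μ • φ}

namespace Matrix

variable {V : Type*} [Fintype V] {M : Matrix V V ℝ}

lemma le_of_mulVec_eq_smul_of_dotProduct_mulVec_le {μ t : ℝ} {φ : V → ℝ} (hφ0 : φ ≠ 0)
    (hφ : M *ᵥ φ = μ • φ) (h : φ ⬝ᵥ (M *ᵥ φ) ≤ t * (φ ⬝ᵥ φ)) : μ ≤ t := by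
  have hpos : 0 < φ ⬝ᵥ φ := by simpa using dotProduct_self_star_pos_iff.mpr hφ0
  rw [hφ, dotProduct_smul, smul_eq_mul] at h
  exact le_of_mul_le_mul_right h hpos

variable [DecidableEq V]

lemma IsHermitian.posSemidef_smul_one_sub (hM : M.IsHermitian) {t : ℝ}
    (ht : ∀ i, hM.eigenvalues i ≤ t) : (t • 1 - M).PosSemidef := by
  set U : Matrix V V ℝ := (hM.eigenvectorUnitary : Matrix V V ℝ)
  set d := hM.eigenvalues
  have hUU : U * star U = 1 := Unitary.coe_mul_star_self hM.eigenvectorUnitary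
  have hM' : M = U * diagonal d * star U := by simpa using hM.spectral_theorem
  have hdiag : t • 1 - M = U * diagonal (fun i => t - d i) * Uᴴ := by
    rw [← diagonal_sub (fun _ => t) d, ← smul_one_eq_diagonal, Matrix.mul_sub, Matrix.sub_mul,
      mul_smul_comm, Matrix.mul_one, smul_mul_assoc, ← star_eq_conjTranspose, hUU, ← hM']
  rw [hdiag]
  exact (PosSemidef.diagonal fun i => sub_nonneg.2 (ht i)).mul_mul_conjTranspose_same U

lemma IsHermitian.dotProduct_mulVec_le (hM : M.IsHermitian) {t : ℝ}
    (ht : ∀ i, hM.eigenvalues i ≤ t) (x : V → ℝ) : x ⬝ᵥ (M *ᵥ x) ≤ t * (x ⬝ᵥ x) := by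
  have := (hM.posSemidef_smul_one_sub ht).dotProduct_mulVec_nonneg x
  rw [sub_mulVec, smul_mulVec, one_mulVec, star_trivial, dotProduct_sub, dotProduct_smul,
    smul_eq_mul] at this
  linarith

lemma IsHermitian.eigenvalues_le_lamMax (hM : M.IsHermitian) (i : V) :
    hM.eigenvalues i ≤ lamMax M := by
  obtain ⟨t, ht⟩ := (Set.finite_range hM.eigenvalues).bddAbove
  refine le_csSup ⟨t, ?_⟩ ⟨hM.eigenvectorBasis i, ?_, hM.mulVec_eigenvectorBasis i⟩
  · rintro μ ⟨φ, hφ0, hφ⟩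
    exact le_of_mulVec_eq_smul_of_dotProduct_mulVec_le hφ0 hφ
      (hM.dotProduct_mulVec_le (fun j => ht ⟨j, rfl⟩) φ)
  · exact fun h => hM.eigenvectorBasis.orthonormal.ne_zero i (WithLp.ofLp_injective 2 h)

lemma IsHermitian.dotProduct_mulVec_le_lamMax (hM : M.IsHermitian) (x : V → ℝ) :
    x ⬝ᵥ (M *ᵥ x) ≤ lamMax M * (x ⬝ᵥ x) :=
  hM.dotProduct_mulVec_le hM.eigenvalues_le_lamMax x

end Matrix

namespace Finset

variable {α : Type*} [DecidableEq α] {S A B : Finset α} {u v : α}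

lemma insert_sdiff_insert_of_notMem (hu : u ∉ S) (huv : u ≠ v) :
    insert u S \ insert v S = {u} := by
  rw [insert_sdiff_of_notMem _ (by simp [huv, hu]),
    sdiff_eq_empty_iff_subset.2 (subset_insert _ _)]
  rfl

lemma insert_inter_insert_of_notMem (hu : u ∉ S) (huv : u ≠ v) :
    insert u S ∩ insert v S = S := by
  rw [insert_inter_of_notMem (by simp [huv, hu]), inter_eq_left.2 (subset_insert _ _)]

lemma symmDiff_insert_insert_of_notMem (hu : u ∉ S) (hv : v ∉ S) (huv : u ≠ v) :
    symmDiff (insert u S) (insert v S) = {u, v} := by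
  rw [Finset.symmDiff_def, insert_sdiff_insert_of_notMem hu huv,
    insert_sdiff_insert_of_notMem hv huv.symm]
  rfl

lemma exists_eq_insert_inter_of_symmDiff_eq_pair (hcard : #A = #B) (h : symmDiff A B = {u, v}) :
    ∃ a b, a ∉ B ∧ b ∉ A ∧ (a = u ∧ b = v ∨ a = v ∧ b = u) ∧
      A = insert a (A ∩ B) ∧ B = insert b (A ∩ B) := by
  have hsum : #(A \ B) + #(B \ A) = #({u, v} : Finset α) := by
    rw [← h, Finset.symmDiff_def, card_union_of_disjoint disjoint_sdiff_sdiff]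
  have hle : #({u, v} : Finset α) ≤ 2 := card_le_two
  have hpos : 0 < #({u, v} : Finset α) := card_pos.2 (insert_nonempty _ _)
  have hAB := card_sdiff_comm hcard
  obtain ⟨a, ha⟩ := card_eq_one.1 (show #(A \ B) = 1 by omega)
  obtain ⟨b, hb⟩ := card_eq_one.1 (show #(B \ A) = 1 by omega)
  have ha' := mem_sdiff.1 (ha ▸ mem_singleton_self a)
  have hb' := mem_sdiff.1 (hb ▸ mem_singleton_self b)
  refine ⟨a, b, ha'.2, hb'.2, ?_, ?_, ?_⟩
  · have hpair : ({a, b} : Finset α) = {u, v} := by rw [← h, Finset.symmDiff_def, ha, hb]; rfl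
    rw [← Set.pair_eq_pair_iff, ← coe_pair, ← coe_pair, hpair]
  · conv_lhs => rw [← sdiff_union_inter A B, ha, ← insert_eq]
  · conv_lhs => rw [← sdiff_union_inter B A, hb, ← insert_eq, inter_comm]

lemma eq_and_eq_and_eq_of_insert_eq_insert {S' : Finset α} {u' v' : α} (hu : u ∉ S) (hv : v ∉ S)
    (huv : u ≠ v) (hu' : u' ∉ S') (hv' : v' ∉ S') (huv' : u' ≠ v')
    (hA : insert u S = insert u' S') (hB : insert v S = insert v' S') :
    S = S' ∧ u = u' ∧ v = v' := by
  have hS : S = S' := by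
    rw [← insert_inter_insert_of_notMem hu huv, hA, hB, insert_inter_insert_of_notMem hu' huv']
  subst hS
  refine ⟨rfl, singleton_inj.1 ?_, singleton_inj.1 ?_⟩
  · rw [← insert_sdiff_insert_of_notMem hu huv, hA, hB, insert_sdiff_insert_of_notMem hu' huv']
  · rw [← insert_sdiff_insert_of_notMem hv huv.symm, hA, hB,
      insert_sdiff_insert_of_notMem hv' huv'.symm]

lemma sum_sum_compl_insert [Fintype α] {M : Type*} [AddCommMonoid M] (f : Finset α → M) :
    ∑ S, ∑ u ∈ Sᶜ, f (insert u S) = ∑ A, #A • f A := by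
  calc ∑ S, ∑ u ∈ Sᶜ, f (insert u S) = ∑ u, ∑ S with u ∉ S, f (insert u S) := by
        refine sum_comm' fun S u => ?_
        simp
    _ = ∑ u, ∑ A with u ∈ A, f A := by
        refine sum_congr rfl fun u _ => ?_
        refine sum_nbij' (insert u) (fun A => A.erase u) ?_ ?_ ?_ ?_ fun _ _ => rfl <;>
          simp +contextual [insert_erase]
    _ = ∑ A, ∑ u ∈ A, f A := by
        refine sum_comm' fun u A => ?_
        simp
    _ = ∑ A, #A • f A := by simp

end Finset

lemma Fintype.sum_extend_val {ι β M : Type*} [Fintype ι] [Zero β] [AddCommMonoid M]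
    {p : ι → Prop} [DecidablePred p] (φ : Subtype p → β) (g : ι → β → M) (hg : ∀ i, g i 0 = 0) :
    ∑ i, g i (Subtype.val.extend φ 0 i) = ∑ i : Subtype p, g i (φ i) := by
  have hzero : ∀ i : {i // ¬p i}, g i (Subtype.val.extend φ 0 i) = 0 := fun i => by
    rw [Function.extend_val_apply' i.2, Pi.zero_apply, hg]
  simp [← Fintype.sum_subtype_add_sum_subtype p, hzero]

section LinkVector

variable {α : Type*} [DecidableEq α]

def linkVector (f : Finset α → ℝ) (S : Finset α) : α → ℝ :=
  fun u => if u ∈ S then 0 else f (insert u S)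

variable [Fintype α]

lemma dotProduct_linkVector_self (f : Finset α → ℝ) (S : Finset α) :
    linkVector f S ⬝ᵥ linkVector f S = ∑ u ∈ Sᶜ, f (insert u S) ^ 2 := by
  rw [dotProduct, ← sum_add_sum_compl S, sum_eq_zero fun u hu => by simp [linkVector, hu],
    zero_add]
  exact sum_congr rfl fun u hu => by simp [linkVector, mem_compl.1 hu, sq]

lemma sum_dotProduct_linkVector_self (f : Finset α → ℝ) :
    ∑ S, linkVector f S ⬝ᵥ linkVector f S = ∑ A, #A * f A ^ 2 := by
  simp_rw [dotProduct_linkVector_self, sum_sum_compl_insert (fun A => f A ^ 2), nsmul_eq_mul]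

end LinkVector

section TokenGraph

variable {n k : ℕ} {G : SimpleGraph (Fin n)}

lemma tokenGraph_adj_iff {A B : {s : Finset (Fin n) // s.card = k}} :
    (tokenGraph n k G).Adj A B ↔
      ∃ S u v, u ∉ S ∧ v ∉ S ∧ G.Adj u v ∧ A.1 = insert u S ∧ B.1 = insert v S := by
  constructor
  · intro hAB
    obtain ⟨u, v, huv, h⟩ : ∃ u v, G.Adj u v ∧ symmDiff A.1 B.1 = {u, v} := by
      obtain ⟨-, ⟨-, h⟩ | ⟨-, u, v, huv, h⟩⟩ := hAB
      · exact h
      · exact ⟨u, v, huv, by rw [symmDiff_comm, h]⟩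
    obtain ⟨a, b, ha, hb, hab, hA, hB⟩ :=
      exists_eq_insert_inter_of_symmDiff_eq_pair (A.2.trans B.2.symm) h
    refine ⟨A.1 ∩ B.1, a, b, fun h => ha (mem_inter.1 h).2, fun h => hb (mem_inter.1 h).1, ?_,
      hA, hB⟩
    rcases hab with ⟨rfl, rfl⟩ | ⟨rfl, rfl⟩
    exacts [huv, huv.symm]
  · rintro ⟨S, u, v, hu, hv, huv, hA, hB⟩
    refine ⟨fun h => ?_, Or.inl ⟨?_, u, v, huv, ?_⟩⟩
    · have hu' : u ∈ B.1 := h ▸ hA ▸ mem_insert_self u S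
      rw [hB, mem_insert] at hu'
      exact hu'.elim huv.ne hu
    · have hcard := A.2
      rw [hA, card_insert_of_notMem hu] at hcard
      rw [hA, hB, insert_inter_insert_of_notMem hu huv.ne]
      omega
    · rw [hA, hB, symmDiff_insert_insert_of_notMem hu hv huv.ne]

end TokenGraph

section TokenLaplacian

variable {n k : ℕ} {G : SimpleGraph (Fin n)} [DecidableRel G.Adj]

lemma sum_tokenGraph_adj_sq_le (φ : {s : Finset (Fin n) // s.card = k} → ℝ) :
    ∑ A, ∑ B, (if (tokenGraph n k G).Adj A B then (φ A - φ B) ^ 2 else 0) ≤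
      ∑ S, ∑ u, ∑ v, if G.Adj u v then
        (linkVector (Subtype.val.extend φ 0) S u - linkVector (Subtype.val.extend φ 0) S v) ^ 2
      else 0 := by
  set ψ : Finset (Fin n) → ℝ := Subtype.val.extend φ 0
  set T := univ.filter fun q : Finset (Fin n) × Fin n × Fin n =>
    q.2.1 ∉ q.1 ∧ q.2.2 ∉ q.1 ∧ G.Adj q.2.1 q.2.2 ∧ #q.1 + 1 = k
  have hcard : ∀ q ∈ T, #(insert q.2.1 q.1) = k ∧ #(insert q.2.2 q.1) = k := fun q hq => by
    obtain ⟨hu, hv, -, hk⟩ := (mem_filter.1 hq).2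
    rw [card_insert_of_notMem hu, card_insert_of_notMem hv]
    exact ⟨hk, hk⟩
  have hedges : ∑ A, ∑ B, (if (tokenGraph n k G).Adj A B then (φ A - φ B) ^ 2 else 0) =
      ∑ q ∈ T, (ψ (insert q.2.1 q.1) - ψ (insert q.2.2 q.1)) ^ 2 := by
    rw [← Fintype.sum_prod_type', ← sum_filter]
    symm
    refine sum_bij (fun q hq => (⟨_, (hcard q hq).1⟩, ⟨_, (hcard q hq).2⟩)) ?_ ?_ ?_ ?_
    · intro q hq
      obtain ⟨hu, hv, huv, -⟩ := (mem_filter.1 hq).2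
      exact mem_filter.2 ⟨mem_univ _, tokenGraph_adj_iff.2 ⟨_, _, _, hu, hv, huv, rfl, rfl⟩⟩
    · rintro ⟨S, u, v⟩ hq ⟨S', u', v'⟩ hq' h
      simp only [T, mem_filter, mem_univ, true_and] at hq hq'
      simp only [Prod.mk.injEq, Subtype.mk.injEq] at h ⊢
      exact eq_and_eq_and_eq_of_insert_eq_insert hq.1 hq.2.1 hq.2.2.1.ne hq'.1 hq'.2.1
        hq'.2.2.1.ne h.1 h.2
    · rintro ⟨A, B⟩ hAB
      obtain ⟨S, u, v, hu, hv, huv, hA, hB⟩ := tokenGraph_adj_iff.1 (mem_filter.1 hAB).2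
      have hk : #S + 1 = k := by rw [← card_insert_of_notMem hu, ← hA, A.2]
      exact ⟨(S, u, v), mem_filter.2 ⟨mem_univ _, hu, hv, huv, hk⟩,
        Prod.ext (Subtype.ext hA.symm) (Subtype.ext hB.symm)⟩
    · intro q hq
      simp only [ψ]
      rw [Function.extend_val_apply (p := fun s : Finset (Fin n) => #s = k) (hcard q hq).1,
        Function.extend_val_apply (p := fun s : Finset (Fin n) => #s = k) (hcard q hq).2]
  have hlink : ∀ q ∈ T, (ψ (insert q.2.1 q.1) - ψ (insert q.2.2 q.1)) ^ 2 =
      if G.Adj q.2.1 q.2.2 then (linkVector ψ q.1 q.2.1 - linkVector ψ q.1 q.2.2) ^ 2 else 0 :=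
    fun q hq => by
      obtain ⟨hu, hv, huv, -⟩ := (mem_filter.1 hq).2
      simp [linkVector, hu, hv, huv]
  rw [hedges, sum_congr rfl hlink]
  refine (sum_le_sum_of_subset_of_nonneg (subset_univ _) fun _ _ _ => by positivity).trans_eq ?_
  simp only [Fintype.sum_prod_type]

lemma dotProduct_lapTok_mulVec_le (φ : {s : Finset (Fin n) // s.card = k} → ℝ) :
    φ ⬝ᵥ (lapTok n k G *ᵥ φ) ≤ k * lamMax (G.lapMatrix ℝ) * (φ ⬝ᵥ φ) := by
  set ψ : Finset (Fin n) → ℝ := Subtype.val.extend φ 0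
  have hL := (G.posSemidef_lapMatrix ℝ).isHermitian
  calc φ ⬝ᵥ (lapTok n k G *ᵥ φ)
      = (∑ A, ∑ B, if (tokenGraph n k G).Adj A B then (φ A - φ B) ^ 2 else 0) / 2 := by
        rw [lapTok, ← toLinearMap₂'_apply', SimpleGraph.lapMatrix_toLinearMap₂']
    _ ≤ (∑ S, ∑ u, ∑ v, if G.Adj u v then
          (linkVector ψ S u - linkVector ψ S v) ^ 2 else 0) / 2 := by
        gcongr
        exact sum_tokenGraph_adj_sq_le φ
    _ = ∑ S, linkVector ψ S ⬝ᵥ (G.lapMatrix ℝ *ᵥ linkVector ψ S) := by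
        rw [sum_div]
        simp_rw [← toLinearMap₂'_apply', SimpleGraph.lapMatrix_toLinearMap₂']
    _ ≤ ∑ S, lamMax (G.lapMatrix ℝ) * (linkVector ψ S ⬝ᵥ linkVector ψ S) :=
        sum_le_sum fun S _ => hL.dotProduct_mulVec_le_lamMax _
    _ = lamMax (G.lapMatrix ℝ) * ∑ A, #A * ψ A ^ 2 := by
        rw [← mul_sum, sum_dotProduct_linkVector_self]
    _ = k * lamMax (G.lapMatrix ℝ) * (φ ⬝ᵥ φ) := by
        have hk (A : {s : Finset (Fin n) // s.card = k}) : (#A.1 : ℝ) = k := congrArg _ A.2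
        rw [Fintype.sum_extend_val φ (fun A y => #A * y ^ 2) (by simp)]
        simp [hk, dotProduct, mul_sum, sq, mul_assoc, mul_left_comm]

end TokenLaplacian

open scoped Classical in
theorem token_eigenvalue_upper_general (n k : ℕ) (G : SimpleGraph (Fin n)) (lam : ℝ)
    (φ : {s : Finset (Fin n) // s.card = k} → ℝ) (hφ0 : φ ≠ 0)
    (hφ : lapTok n k G *ᵥ φ = lam • φ) :
    lam ≤ (k : ℝ) * lamMax (G.lapMatrix ℝ) :=
  le_of_mulVec_eq_smul_of_dotProduct_mulVec_le hφ0 hφ (dotProduct_lapTok_mulVec_le φ)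

open scoped Classical in
/-- For `1 ≤ k ≤ ⌊n/2⌋`, every eigenvalue `λ` of `L_k(G)` satisfies
`λ ≤ k λ_max(L(G))`. -/
theorem token_eigenvalue_upper (n k : ℕ) (G : SimpleGraph (Fin n)) (hk : 1 ≤ k)
    (hkn : k ≤ n / 2) (lam : ℝ) (φ : {s : Finset (Fin n) // s.card = k} → ℝ) (hφ0 : φ ≠ 0)
    (hφ : lapTok n k G *ᵥ φ = lam • φ) :
    lam ≤ (k : ℝ) * lamMax (G.lapMatrix ℝ) :=
  token_eigenvalue_upper_general n k G lam φ hφ0 hφ
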